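/- Let n ≥ 1, let a₁, …, aₙ ≥ 0 be real numbers with Σᵢ aᵢ > 0, and let x ≥ 0 satisfy aᵢ + x > 0 for every i. Then (1/n) Σᵢ aᵢ/(aᵢ + x)² ≥ (n / Σᵢ aᵢ) · (1 − √((1/n) Σᵢ (x/(aᵢ + x))²))². -/

import Mathlib

/-! Put `cᵢ = x / (aᵢ + x) ∈ [0, 1]`, so that `aᵢ / (aᵢ + x) = 1 - cᵢ`. The mean of the `cᵢ` is at
most their root mean square `q ≤ 1`, hence `∑ aᵢ / (aᵢ + x) ≥ n (1 - q) ≥ 0`. The weighted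
Cauchy–Schwarz inequality `(∑ aᵢ / (aᵢ + x))² ≤ (∑ aᵢ) (∑ aᵢ / (aᵢ + x)²)` then gives
`n² (1 - q)² ≤ (∑ aᵢ) (∑ aᵢ / (aᵢ + x)²)`, which is the claim after dividing by `n ∑ aᵢ`. -/

open Finset

lemma sum_le_card_mul_sqrt_mean_sq {ι : Type*} (s : Finset ι) (f : ι → ℝ) :
    ∑ i ∈ s, f i ≤ #s * √((1 / #s : ℝ) * ∑ i ∈ s, f i ^ 2) := by
  rcases s.eq_empty_or_nonempty with rfl | hs
  · simp
  have hcard : (0 : ℝ) < #s := by exact_mod_cast hs.card_pos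
  calc ∑ i ∈ s, f i ≤ √((∑ i ∈ s, f i) ^ 2) := (Real.sqrt_sq_eq_abs _).symm ▸ le_abs_self _
    _ ≤ √(#s * ∑ i ∈ s, f i ^ 2) := Real.sqrt_le_sqrt (sq_sum_le_card_mul_sum_sq ..)
    _ = √((#s : ℝ) ^ 2 * ((1 / #s : ℝ) * ∑ i ∈ s, f i ^ 2)) := by field_simp
    _ = #s * √((1 / #s : ℝ) * ∑ i ∈ s, f i ^ 2) := by
      rw [Real.sqrt_mul (sq_nonneg _), Real.sqrt_sq hcard.le]

lemma sqrt_mean_sq_le_one {ι : Type*} (s : Finset ι) {f : ι → ℝ} (hf : ∀ i ∈ s, |f i| ≤ 1) :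
    √((1 / #s : ℝ) * ∑ i ∈ s, f i ^ 2) ≤ 1 := by
  refine Real.sqrt_le_one.mpr ?_
  have hsum : ∑ i ∈ s, f i ^ 2 ≤ #s := by
    simpa using sum_le_sum fun i hi ↦ (sq_le_one_iff_abs_le_one _).mpr (hf i hi)
  rw [one_div, ← div_eq_inv_mul]
  exact div_le_one_of_le₀ hsum (Nat.cast_nonneg _)

lemma sq_sum_div_le_sum_mul_sum_div_sq {ι : Type*} (s : Finset ι) {a : ι → ℝ} (c : ι → ℝ)
    (ha : ∀ i ∈ s, 0 ≤ a i) :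
    (∑ i ∈ s, a i / c i) ^ 2 ≤ (∑ i ∈ s, a i) * ∑ i ∈ s, a i / c i ^ 2 :=
  sum_sq_le_sum_mul_sum_of_sq_le_mul s ha (fun i hi ↦ div_nonneg (ha i hi) (sq_nonneg _))
    fun i _ ↦ by rw [div_pow, sq, mul_div_assoc]

theorem stmt1 (n : ℕ) (hn : 1 ≤ n) (a : Fin n → ℝ) (ha : ∀ i, 0 ≤ a i)
    (x : ℝ) (hx : 0 ≤ x) (hax : ∀ i, 0 < a i + x) :
    (1 / n : ℝ) * ∑ i, a i / (a i + x) ^ 2 ≥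
      ((n : ℝ) / ∑ i, a i) *
        (1 - Real.sqrt ((1 / n : ℝ) * ∑ i, (x / (a i + x)) ^ 2)) ^ 2 := by
  set c : Fin n → ℝ := fun i ↦ x / (a i + x)
  set q := √((1 / n : ℝ) * ∑ i, c i ^ 2)
  have hc : ∀ i, |c i| ≤ 1 := fun i ↦ by
    rw [abs_div, abs_of_nonneg hx, abs_of_pos (hax i), div_le_one (hax i)]
    linarith [ha i]
  have hq : q ≤ 1 := by
    simpa only [card_univ, Fintype.card_fin] using sqrt_mean_sq_le_one univ fun i _ ↦ hc i
  have hsplit : ∑ i, a i / (a i + x) = n - ∑ i, c i := by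
    have hterm : ∀ i, a i / (a i + x) = 1 - c i := fun i ↦ by
      rw [eq_sub_iff_add_eq, ← add_div, div_self (hax i).ne']
    simp [hterm, sum_sub_distrib]
  have hlower : n * (1 - q) ≤ ∑ i, a i / (a i + x) := by
    have := sum_le_card_mul_sqrt_mean_sq univ c
    simp only [card_univ, Fintype.card_fin] at this
    linarith
  have hCS : (∑ i, a i / (a i + x)) ^ 2 ≤ (∑ i, a i) * ∑ i, a i / (a i + x) ^ 2 :=
    sq_sum_div_le_sum_mul_sum_div_sq univ _ fun i _ ↦ ha i
  have hn0 : (n : ℝ) ≠ 0 := Nat.cast_ne_zero.mpr (by omega)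
  have hS : 0 ≤ ∑ i, a i := sum_nonneg fun i _ ↦ ha i
  calc (n : ℝ) / (∑ i, a i) * (1 - q) ^ 2 = 1 / n * ((n * (1 - q)) ^ 2 / ∑ i, a i) := by
        field_simp
    _ ≤ 1 / n * ((∑ i, a i / (a i + x)) ^ 2 / ∑ i, a i) := by
        gcongr
    _ ≤ 1 / n * ∑ i, a i / (a i + x) ^ 2 := by
        gcongr
        exact div_le_of_le_mul₀ hS (sum_nonneg fun i _ ↦ div_nonneg (ha i) (sq_nonneg _))
          (hCS.trans_eq (mul_comm _ _))
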